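/- arXiv:1512.00501 — 3 statements merged into one kernel-verified Lean document; each statement's English description precedes it below -/
import Mathlib

section
/- Let N and k be natural numbers with 1 ≤ k ≤ N. For every index x : Fin N, the number of choice sequences that select x, multiplied by N, equals k times the total number of choice sequences ∏_{t=0}^{k−1}(N−t). Equivalently, under the uniform distribution on choice sequences, each index x is selected with probability exactly k/N. -/
/-- The permutation of `Fin N` produced by `k` iterations of the partial
Fisher–Yates shuffle driven by the choice sequence `j`: iteration `t`
(for `t = 0, …, k-1`) swaps the array entries at positions `N-1-t` and
`j t`, the iterations being performed left-to-right (`t = 0` first).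
As a permutation this is `swap (N-1) (j 0) * ⋯ * swap (N-1-(k-1)) (j (k-1))`,
so that `fyPerm N k j p` is the final content of array slot `p` when the
array is initialized with `a[p] = p`. -/
def fyPerm (N k : ℕ) (j : ∀ t : Fin k, Fin (N - (t : ℕ))) : Equiv.Perm (Fin N) :=
  (List.ofFn fun t : Fin k =>
      Equiv.swap
        (⟨N - 1 - (t : ℕ), by have := (j t).isLt; omega⟩ : Fin N)
        (⟨((j t) : ℕ), by have := (j t).isLt; omega⟩ : Fin N)).prod

/-!
Let `c_k` be the number of choice sequences of length `k` selecting `x` and `T_k = ∏_{t<k} (N - t)`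
the number of all of them. Iteration `k` moves the contents of slot `j k` to slot `N - 1 - k`
and leaves the slots `≥ N - k` alone, so `x` is selected after it iff it was selected before, or
`j k` is the slot currently holding `x`: every selecting sequence has `N - k` selecting extensions,
every other one exactly one. Hence `c_{k+1} = (N - k) c_k + (T_k - c_k)`, and the invariant
`c_k N = k T_k` passes from `k` to `k + 1`.
-/

open Finset

lemma card_pi_fin_sub (N k : ℕ) :
    Fintype.card (∀ t : Fin k, Fin (N - (t : ℕ))) = ∏ t ∈ range k, (N - t) := by
  simp [Fintype.card_pi, ← Fin.prod_univ_eq_prod_range (fun t => N - t)]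

theorem fyPerm_snoc (N k : ℕ) (hkN : k + 1 ≤ N)
    (j : ∀ t : Fin k, Fin (N - (t : ℕ))) (b : Fin (N - k)) :
    fyPerm N (k + 1) (Fin.snoc j b) =
      fyPerm N k j * Equiv.swap ⟨N - 1 - k, by omega⟩ ⟨b, by omega⟩ := by
  unfold fyPerm
  rw [List.ofFn_succ', List.concat_eq_append, List.prod_append, List.prod_singleton]
  congr
  · simp only [Fin.snoc_castSucc, Fin.val_castSucc]
  · simp only [Fin.snoc_last, Fin.val_last]

lemma le_swap_apply_iff {N m : ℕ} (hm : m < N) {b : Fin N} (hb : (b : ℕ) ≤ m) (y : Fin N) :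
    m ≤ (Equiv.swap ⟨m, hm⟩ b y : ℕ) ↔ m < y ∨ (b : ℕ) = y := by
  rcases eq_or_ne y ⟨m, hm⟩ with rfl | hym
  · simp only [Equiv.swap_apply_left]
    omega
  rcases eq_or_ne y b with rfl | hyb
  · simp
  · rw [Equiv.swap_apply_of_ne_of_ne hym hyb]
    simp only [ne_eq, Fin.ext_iff] at hym hyb
    omega

lemma card_filter_le_or_val_eq (n y : ℕ) :
    #{b : Fin n | n ≤ y ∨ (b : ℕ) = y} = if n ≤ y then n else 1 := by
  split_ifs with hy
  · simp [hy]
  · have : ({b : Fin n | n ≤ y ∨ (b : ℕ) = y} : Finset (Fin n)) = {⟨y, by omega⟩} := by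
      ext b
      simp [hy, Fin.ext_iff]
    simp [this]

def selectedChoices (N k : ℕ) (x : Fin N) : Finset (∀ t : Fin k, Fin (N - (t : ℕ))) :=
  univ.filter fun j => N - k ≤ (((fyPerm N k j)⁻¹ x : Fin N) : ℕ)

section

variable {N k : ℕ} (x : Fin N)

lemma snoc_mem_selectedChoices_iff (hkN : k + 1 ≤ N)
    (j : ∀ t : Fin k, Fin (N - (t : ℕ))) (b : Fin (N - k)) :
    Fin.snoc j b ∈ selectedChoices N (k + 1) x ↔
      N - k ≤ (((fyPerm N k j)⁻¹ x : Fin N) : ℕ) ∨ (b : ℕ) = ((fyPerm N k j)⁻¹ x : Fin N) := by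
  have hb := b.isLt
  rw [selectedChoices, mem_filter, fyPerm_snoc N k hkN, mul_inv_rev, Equiv.swap_inv,
    Equiv.Perm.mul_apply, show N - (k + 1) = N - 1 - k by omega,
    le_swap_apply_iff _ (by simp only; omega)]
  simp only [mem_univ, true_and]
  omega

lemma card_selectedChoices_succ (hkN : k + 1 ≤ N) :
    #(selectedChoices N (k + 1) x) =
      ∑ j : ∀ t : Fin k, Fin (N - (t : ℕ)), if j ∈ selectedChoices N k x then N - k else 1 := by
  calc #(selectedChoices N (k + 1) x)
      = ∑ j, if j ∈ selectedChoices N (k + 1) x then 1 else 0 := by simp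
    _ = ∑ j : ∀ t : Fin k, Fin (N - (t : ℕ)), ∑ b : Fin (N - k),
          if Fin.snoc j b ∈ selectedChoices N (k + 1) x then 1 else 0 := by
      rw [← (Fin.snocEquiv _).sum_comp, Fintype.sum_prod_type_right]
      rfl
    _ = ∑ j : ∀ t : Fin k, Fin (N - (t : ℕ)), #{b : Fin (N - k) |
          N - k ≤ (((fyPerm N k j)⁻¹ x : Fin N) : ℕ) ∨ (b : ℕ) = ((fyPerm N k j)⁻¹ x : Fin N)} := by
      simp_rw [snoc_mem_selectedChoices_iff x hkN, sum_boole, Nat.cast_id]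
    _ = _ := by simp_rw [card_filter_le_or_val_eq, selectedChoices, mem_filter, mem_univ, true_and]

lemma card_selectedChoices_mul (hkN : k ≤ N) :
    #(selectedChoices N k x) * N = k * ∏ t ∈ range k, (N - t) := by
  induction k with
  | zero =>
    simp [selectedChoices, Fin.is_lt]
  | succ k ih =>
    set c := #(selectedChoices N k x)
    set T := ∏ t ∈ range k, (N - t) with hT
    have hcT : c ≤ T := (card_le_univ _).trans_eq (card_pi_fin_sub N k)
    have hcount : #(selectedChoices N (k + 1) x) = c * (N - k) + (T - c) := by
      rw [card_selectedChoices_succ x hkN, sum_ite, sum_const, sum_const, filter_mem_eq_inter,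
        univ_inter, filter_not, filter_mem_eq_inter, univ_inter, ← compl_eq_univ_sdiff,
        card_compl, card_pi_fin_sub, smul_eq_mul, smul_eq_mul, mul_one]
    have hc : (c : ℤ) * N = k * T := by exact_mod_cast ih (by omega)
    rw [hcount, prod_range_succ, ← hT]
    zify [hcT, show k ≤ N by omega]
    linear_combination ((N : ℤ) - k - 1) * hc

end

theorem fy_selected_count_general (N k : ℕ) (hkN : k ≤ N) (x : Fin N) :
    (Finset.univ.filter fun j : ∀ t : Fin k, Fin (N - (t : ℕ)) =>
        N - k ≤ (((fyPerm N k j)⁻¹ x : Fin N) : ℕ)).card * N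
      = k * ∏ t ∈ Finset.range k, (N - t) :=
  card_selectedChoices_mul x hkN

/-- Each index `x : Fin N` is selected by the partial Fisher–Yates shuffle
(`x` ends in one of the last `k` array positions, i.e.
`(fyPerm N k j)⁻¹ x ≥ N - k`) with probability exactly `k / N`: the number
of choice sequences selecting `x`, multiplied by `N`, equals `k` times the
total number `∏_{t<k} (N - t)` of choice sequences. -/
theorem fy_selected_count (N k : ℕ) (hk : 1 ≤ k) (hkN : k ≤ N) (x : Fin N) :
    (Finset.univ.filter fun j : ∀ t : Fin k, Fin (N - (t : ℕ)) =>
        N - k ≤ (((fyPerm N k j)⁻¹ x : Fin N) : ℕ)).card * N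
      = k * ∏ t ∈ Finset.range k, (N - t) :=
  fy_selected_count_general N k hkN x
end

section
/- Let N, m be natural numbers with m < N. Fix an index x : Fin N and a choice sequence j of length m after which x is not selected (i.e. π_j⁻¹ x < N − m). Among the N − m possible draws j' : Fin (N − m) extending the sequence to length m+1 (iteration m+1 swaps positions N−1−m and j'), exactly one draw causes x to become selected, namely j' equal to the current position π_j⁻¹ x of x. Hence the conditional probability that x is selected at iteration m+1, given that it was not selected during the first m iterations, is 1/(N − m). -/
open Equiv

theorem le_swap_apply_iff_s3 {α : Type*} [LinearOrder α] {a b p : α}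
    (hb : b ≤ a) (hp : p ≤ a) : a ≤ swap a b p ↔ b = p := by
  rcases eq_or_ne p a with rfl | hpa
  · rw [swap_apply_left, le_antisymm_iff]
    exact ⟨fun h => ⟨hb, h⟩, fun h => h.2⟩
  rcases eq_or_ne p b with rfl | hpb
  · simp only [swap_apply_right, le_refl]
  · rw [swap_apply_of_ne_of_ne hpa hpb]
    exact iff_of_false (hp.lt_of_ne hpa).not_ge (Ne.symm hpb)

/-- Conditional selection probability at iteration `m+1`: if after the first
`m` iterations the index `x` is not yet selected (its current position
`(fyPerm N m j)⁻¹ x` is `< N - m`), then among the `N - m` possible draws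
`j' : Fin (N - m)` at iteration `m+1` (which further swaps the array
entries at positions `N-1-m` and `j'`, i.e. composes the transposition
`swap (N-1-m) j'` on the right), exactly one draw makes `x` selected
(extended position `≥ N - (m+1)`), namely `j'` equal to the current
position of `x`. Hence the conditional probability is `1 / (N - m)`. -/
theorem fy_conditional_selection (N m : ℕ) (hm : m < N) (x : Fin N)
    (j : ∀ t : Fin m, Fin (N - (t : ℕ)))
    (hx : (((fyPerm N m j)⁻¹ x : Fin N) : ℕ) < N - m) :
    (Finset.univ.filter fun j' : Fin (N - m) =>
        N - (m + 1) ≤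
          (((fyPerm N m j
              * Equiv.swap (⟨N - 1 - m, by omega⟩ : Fin N)
                  (⟨(j' : ℕ), by have := j'.isLt; omega⟩ : Fin N))⁻¹ x : Fin N) : ℕ))
      = {(⟨(((fyPerm N m j)⁻¹ x : Fin N) : ℕ), hx⟩ : Fin (N - m))} := by
  ext j'
  have hj' := j'.isLt
  have hlast := le_swap_apply_iff_s3 (a := (⟨N - 1 - m, by omega⟩ : Fin N))
    (b := ⟨j', by omega⟩) (p := (fyPerm N m j)⁻¹ x)
    (Fin.le_def.2 (by simp only; omega)) (Fin.le_def.2 (by simp only; omega))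
  simp only [Fin.le_def, Fin.ext_iff] at hlast
  simp only [Finset.mem_filter, Finset.mem_univ, true_and, Finset.mem_singleton, Fin.ext_iff,
    mul_inv_rev, swap_inv, Perm.mul_apply]
  rw [← hlast]
  omega
end

section
/- Let N and k be natural numbers with k ≤ N. The map sending a choice sequence j to its output tuple (π_j(N−1), π_j(N−2), …, π_j(N−k)) is a bijection from the set of choice sequences onto the set of injective k-tuples of elements of Fin N. Consequently every ordered k-tuple of pairwise distinct indices is produced by exactly one choice sequence, so under uniform choices each such tuple occurs with probability 1/∏_{t=0}^{k−1}(N−t): the partial Fisher–Yates shuffle samples an ordered k-sample from {0,…,N−1} uniformly. -/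
open Function Equiv

section

variable {N : ℕ}

theorem fyPerm_succ {k : ℕ} (j : ∀ t : Fin (k + 1), Fin (N - t)) :
    fyPerm N (k + 1) j = fyPerm N k (Fin.init j) *
      swap ⟨N - 1 - k, by have := (j (Fin.last k)).isLt; omega⟩
        ((j (Fin.last k)).castLE (Nat.sub_le N k)) := by
  rw [fyPerm, List.ofFn_succ', List.concat_eq_append, List.prod_append, List.prod_singleton]
  rfl

/-- Slot `N - 1 - t` is written `(Fin.castLE hk t).rev`. -/
def fyOutput {k : ℕ} (hk : k ≤ N) (j : ∀ t : Fin k, Fin (N - t)) : Fin k → Fin N :=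
  fun t => fyPerm N k j (Fin.castLE hk t).rev

theorem fyOutput_succ {k : ℕ} (hk : k + 1 ≤ N) (j : ∀ t : Fin (k + 1), Fin (N - t)) :
    fyOutput hk j = Fin.snoc (fyOutput (Nat.le_of_succ_le hk) (Fin.init j))
      (fyPerm N k (Fin.init j) ((j (Fin.last k)).castLE (Nat.sub_le N k))) := by
  have hj : (j (Fin.last k) : ℕ) < N - k := (j (Fin.last k)).isLt
  funext t
  induction t using Fin.lastCases with
  | last =>
    rw [Fin.snoc_last, fyOutput, fyPerm_succ, Perm.mul_apply]
    congr 1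
    convert swap_apply_left _ _ using 2
    ext; simp only [Fin.val_rev, Fin.val_castLE, Fin.val_last]; omega
  | cast t =>
    rw [Fin.snoc_castSucc, fyOutput, fyOutput, fyPerm_succ, Perm.mul_apply, swap_apply_of_ne_of_ne]
    · rfl
    all_goals simp only [ne_eq, Fin.ext_iff, Fin.val_rev, Fin.val_castLE, Fin.val_castSucc]; omega

theorem fyPerm_mem_range_fyOutput_iff {k : ℕ} (hk : k ≤ N) (j : ∀ t : Fin k, Fin (N - t))
    (x : Fin N) : fyPerm N k j x ∈ Set.range (fyOutput hk j) ↔ N - k ≤ x := by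
  simp only [Set.mem_range, fyOutput, (fyPerm N k j).injective.eq_iff]
  constructor
  · rintro ⟨t, rfl⟩
    simp only [Fin.val_rev, Fin.val_castLE]; omega
  · intro hx
    exact ⟨⟨N - 1 - x, by omega⟩, by ext; simp only [Fin.castLE_mk, Fin.val_rev]; omega⟩

theorem injective_fyOutput {k : ℕ} (hk : k ≤ N) (j : ∀ t : Fin k, Fin (N - t)) :
    Injective (fyOutput hk j) := by
  induction k with
  | zero => exact injective_of_subsingleton _
  | succ k ih =>
    have hj : (j (Fin.last k) : ℕ) < N - k := (j (Fin.last k)).isLt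
    rw [fyOutput_succ, Fin.snoc_injective_iff, fyPerm_mem_range_fyOutput_iff]
    exact ⟨ih _ _, by rw [Fin.val_castLE]; omega⟩

theorem fyOutput_injective {k : ℕ} (hk : k ≤ N) : Injective (fyOutput hk) := by
  induction k with
  | zero => exact injective_of_subsingleton _
  | succ k ih =>
    intro j j' h
    rw [fyOutput_succ, fyOutput_succ, Fin.snoc_inj] at h
    obtain ⟨h_init, h_last⟩ := h
    have h_init := ih _ h_init
    rw [h_init, (fyPerm N k _).injective.eq_iff, Fin.castLE_inj] at h_last
    rw [← Fin.snoc_init_self j, ← Fin.snoc_init_self j', h_init, h_last]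

theorem exists_fyOutput_eq {k : ℕ} (hk : k ≤ N) {f : Fin k → Fin N} (hf : Injective f) :
    ∃ j, fyOutput hk j = f := by
  induction k with
  | zero => exact ⟨finZeroElim, Subsingleton.elim _ _⟩
  | succ k ih =>
    rw [← Fin.snoc_init_self f, Fin.snoc_injective_iff] at hf
    obtain ⟨hf_init, hf_last⟩ := hf
    obtain ⟨j, hj⟩ := ih (Nat.le_of_succ_le hk) hf_init
    set σ := fyPerm N k j
    have hx : (σ.symm (f (Fin.last k)) : ℕ) < N - k := by
      rw [← hj, ← σ.apply_symm_apply (f (Fin.last k)), fyPerm_mem_range_fyOutput_iff] at hf_last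
      omega
    refine ⟨Fin.snoc (α := fun t : Fin (k + 1) => Fin (N - t)) j ⟨_, hx⟩, ?_⟩
    rw [fyOutput_succ, Fin.init_snoc, Fin.snoc_last, hj]
    conv_rhs => rw [← Fin.snoc_init_self f]
    congr 1
    exact σ.apply_symm_apply _

theorem bijOn_fyOutput {k : ℕ} (hk : k ≤ N) :
    Set.BijOn (fyOutput hk) Set.univ {f : Fin k → Fin N | Injective f} :=
  ⟨fun j _ => injective_fyOutput hk j, (fyOutput_injective hk).injOn,
    fun _ hf => (exists_fyOutput_eq hk hf).imp fun _ hj => ⟨trivial, hj⟩⟩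

end

/-- The map sending a choice sequence `j` to its output tuple
`(fyPerm N k j (N-1), fyPerm N k j (N-2), …, fyPerm N k j (N-k))` is a
bijection from the set of all choice sequences onto the set of injective
`k`-tuples of elements of `Fin N`. Consequently every ordered `k`-tuple of
pairwise distinct indices is produced by exactly one choice sequence, so
under uniform choices each such tuple occurs with probability
`1 / ∏_{t<k} (N - t)`: the partial Fisher–Yates shuffle samples an ordered
`k`-sample from `{0, …, N-1}` uniformly. -/
theorem fy_output_bijective (N k : ℕ) (hk : k ≤ N) :
    Set.BijOn
      (fun j : ∀ t : Fin k, Fin (N - (t : ℕ)) =>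
        fun t : Fin k =>
          fyPerm N k j (⟨N - 1 - (t : ℕ), by have := t.isLt; omega⟩ : Fin N))
      Set.univ
      {f : Fin k → Fin N | Function.Injective f} := by
  have hslot (t : Fin k) : (⟨N - 1 - t, by omega⟩ : Fin N) = (Fin.castLE hk t).rev := by
    ext; simp only [Fin.val_rev, Fin.val_castLE]; omega
  simp only [hslot]
  exact bijOn_fyOutput hk
end
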